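/- Deterministic core of the interactive forward guarantee (Inter-FAIL). In a discounted MDP with initial distribution P0, let πf be a stationary policy, let μ be a probability vector on S, let κ : S → (A → ℝ) be a stochastic kernel (κ(a|s) ≥ 0, ∑_a κ(a|s) = 1), let G be a finite nonempty set of functions S → ℝ, and let ε ≥ 0. Write ν = d^{πf}_{P0}. Assume: (i) stationarity of the offline distribution: μ(s') = (1−γ)·P0(s') + γ·∑_{s,a} μ(s) κ(a|s) P(s'|s,a) for every s'; (ii) no-regret guarantee: for every g ∈ G, |∑_{s,a,s'} ν(s) (πf(a|s) − κ(a|s)) P(s'|s,a) g(s')| ≤ ε; (iii) exact completeness: for every g ∈ G there exists f ∈ G with f(s) = ∑_{a,s'} κ(a|s) P(s'|s,a) g(s') for every s. Then max_{g ∈ G} |∑_s (ν(s) − μ(s)) g(s)| ≤ ε/(1−γ). -/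
import Mathlib


open Finset

/-- Iterates of the state distribution of a stationary policy `π` in a discounted MDP:
`ν^π_0 = ν` and `ν^π_{h+1}(s') = ∑_{s,a} ν^π_h(s) π(a|s) P(s'|s,a)`. -/
noncomputable def nuPol {S A : Type*} [Fintype S] [Fintype A]
    (P : S → A → S → ℝ) (π : S → A → ℝ) (ν : S → ℝ) : ℕ → S → ℝ
  | 0 => ν
  | h + 1 => fun s' => ∑ s : S, ∑ a : A, nuPol P π ν h s * π s a * P s a s'

/-- Discounted occupancy `d^π_ν(s) = (1 − γ) ∑_{h=0}^∞ γ^h ν^π_h(s)`. -/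
noncomputable def dDisc {S A : Type*} [Fintype S] [Fintype A] (γ : ℝ)
    (P : S → A → S → ℝ) (π : S → A → ℝ) (ν : S → ℝ) (s : S) : ℝ :=
  (1 - γ) * ∑' h : ℕ, γ ^ h * nuPol P π ν h s

section Aux
variable {S A : Type*} [Fintype S] [Fintype A]
variable (P : S → A → S → ℝ) (π : S → A → ℝ) (ν : S → ℝ)

lemma nuPol_nonneg (hP : ∀ s a s', 0 ≤ P s a s') (hπ : ∀ s a, 0 ≤ π s a)
    (hν : ∀ s, 0 ≤ ν s) : ∀ h s, 0 ≤ nuPol P π ν h s := by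
  intro h
  induction h with
  | zero => exact hν
  | succ n ih =>
    intro s'
    simp only [nuPol]
    refine Finset.sum_nonneg fun s _ => Finset.sum_nonneg fun a _ => ?_
    exact mul_nonneg (mul_nonneg (ih s) (hπ s a)) (hP s a s')

lemma nuPol_sum (hP1 : ∀ s a, ∑ s' : S, P s a s' = 1) (hπ1 : ∀ s, ∑ a : A, π s a = 1)
    (hν1 : ∑ s : S, ν s = 1) : ∀ h, ∑ s : S, nuPol P π ν h s = 1 := by
  intro h
  induction h with
  | zero => exact hν1
  | succ n ih =>
    simp only [nuPol]
    rw [Finset.sum_comm]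
    calc ∑ s : S, ∑ s' : S, ∑ a : A, nuPol P π ν n s * π s a * P s a s'
        = ∑ s : S, ∑ a : A, ∑ s' : S, nuPol P π ν n s * π s a * P s a s' := by
          exact Finset.sum_congr rfl fun s _ => Finset.sum_comm

      _ = ∑ s : S, ∑ a : A, nuPol P π ν n s * π s a := by
          refine Finset.sum_congr rfl fun s _ => Finset.sum_congr rfl fun a _ => ?_
          rw [← Finset.mul_sum, hP1, mul_one]
      _ = ∑ s : S, nuPol P π ν n s := by
          refine Finset.sum_congr rfl fun s _ => ?_
          rw [← Finset.mul_sum, hπ1, mul_one]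
      _ = 1 := ih

lemma nuPol_le_one (hP : ∀ s a s', 0 ≤ P s a s') (hπ : ∀ s a, 0 ≤ π s a)
    (hν : ∀ s, 0 ≤ ν s) (hP1 : ∀ s a, ∑ s' : S, P s a s' = 1)
    (hπ1 : ∀ s, ∑ a : A, π s a = 1) (hν1 : ∑ s : S, ν s = 1) :
    ∀ h s, nuPol P π ν h s ≤ 1 := by
  intro h s
  have := Finset.single_le_sum (f := fun s => nuPol P π ν h s)
    (fun i _ => nuPol_nonneg P π ν hP hπ hν h i) (Finset.mem_univ s)
  rw [nuPol_sum P π ν hP1 hπ1 hν1 h] at this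
  exact this

lemma summable_nu {γ : ℝ} (hγ0 : 0 ≤ γ) (hγ1 : γ < 1)
    (hP : ∀ s a s', 0 ≤ P s a s') (hπ : ∀ s a, 0 ≤ π s a)
    (hν : ∀ s, 0 ≤ ν s) (hP1 : ∀ s a, ∑ s' : S, P s a s' = 1)
    (hπ1 : ∀ s, ∑ a : A, π s a = 1) (hν1 : ∑ s : S, ν s = 1) (s : S) :
    Summable (fun h : ℕ => γ ^ h * nuPol P π ν h s) := by
  refine Summable.of_nonneg_of_le
    (fun h => mul_nonneg (pow_nonneg hγ0 h) (nuPol_nonneg P π ν hP hπ hν h s))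
    (fun h => ?_) (summable_geometric_of_lt_one hγ0 hγ1)
  calc γ ^ h * nuPol P π ν h s ≤ γ ^ h * 1 := by
        exact mul_le_mul_of_nonneg_left (nuPol_le_one P π ν hP hπ hν hP1 hπ1 hν1 h s)
          (pow_nonneg hγ0 h)
    _ = γ ^ h := mul_one _

lemma dDisc_fix {γ : ℝ} (hγ0 : 0 ≤ γ) (hγ1 : γ < 1)
    (hP : ∀ s a s', 0 ≤ P s a s') (hπ : ∀ s a, 0 ≤ π s a)
    (hν : ∀ s, 0 ≤ ν s) (hP1 : ∀ s a, ∑ s' : S, P s a s' = 1)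
    (hπ1 : ∀ s, ∑ a : A, π s a = 1) (hν1 : ∑ s : S, ν s = 1) (s' : S) :
    dDisc γ P π ν s' = (1 - γ) * ν s' +
      γ * ∑ s : S, ∑ a : A, dDisc γ P π ν s * π s a * P s a s' := by
  have hsum : ∀ s : S, Summable (fun h : ℕ => γ ^ h * nuPol P π ν h s) :=
    summable_nu P π ν hγ0 hγ1 hP hπ hν hP1 hπ1 hν1
  have key : (∑' h : ℕ, γ ^ h * nuPol P π ν h s') =
      ν s' + γ * ∑ s : S, ∑ a : A, (∑' h : ℕ, γ ^ h * nuPol P π ν h s) * π s a * P s a s' := by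
    rw [Summable.tsum_eq_zero_add (hsum s')]
    simp only [pow_zero, one_mul]
    congr 1
    have step : ∀ h : ℕ, γ ^ (h + 1) * nuPol P π ν (h + 1) s'
        = γ * ∑ s : S, ∑ a : A, (γ ^ h * nuPol P π ν h s) * π s a * P s a s' := by
      intro h
      simp only [nuPol, pow_succ, Finset.mul_sum]
      refine Finset.sum_congr rfl fun s _ => Finset.sum_congr rfl fun a _ => ?_
      ring
    rw [tsum_congr step, tsum_mul_left]
    congr 1
    rw [Summable.tsum_finsetSum (fun s _ => summable_sum fun a _ => ((hsum s).mul_right _).mul_right _)]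
    refine Finset.sum_congr rfl fun s _ => ?_
    rw [Summable.tsum_finsetSum (fun a _ => ((hsum s).mul_right _).mul_right _)]
    refine Finset.sum_congr rfl fun a _ => ?_
    rw [← tsum_mul_right, ← tsum_mul_right]
  unfold dDisc
  rw [key]
  rw [mul_add]
  congr 1
  rw [← mul_assoc, mul_comm (1 - γ) γ, mul_assoc]
  congr 1
  rw [Finset.mul_sum]
  refine Finset.sum_congr rfl fun s _ => ?_
  rw [Finset.mul_sum]
  refine Finset.sum_congr rfl fun a _ => ?_
  ring

end Aux

lemma swap3 {S A : Type*} [Fintype S] [Fintype A] (X : S → A → S → ℝ) (g : S → ℝ) :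
    ∑ s' : S, (∑ s : S, ∑ a : A, X s a s') * g s'
      = ∑ s : S, ∑ a : A, ∑ s' : S, X s a s' * g s' := by
  simp only [Finset.sum_mul]
  rw [Finset.sum_comm]
  exact Finset.sum_congr rfl fun s _ => Finset.sum_comm


/-- Deterministic core of the interactive forward guarantee (Inter-FAIL).
With `ν = d^{πf}_{P0}`: if the offline distribution `μ` is stationary for the kernel `κ`,
the no-regret guarantee holds for every discriminator `g ∈ G`, and `G` is exactly complete
under the backup by `κ`, then `max_{g ∈ G} |∑_s (ν(s) − μ(s)) g(s)| ≤ ε/(1−γ)`. -/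
theorem inter_fail_deterministic_core
    {S A : Type*} [Fintype S] [Fintype A] [Nonempty S] [Nonempty A]
    (γ : ℝ) (hγ0 : 0 ≤ γ) (hγ1 : γ < 1)
    (P : S → A → S → ℝ) (hP0 : ∀ s a s', 0 ≤ P s a s') (hP1 : ∀ s a, ∑ s' : S, P s a s' = 1)
    (P0 : S → ℝ) (hP00 : ∀ s, 0 ≤ P0 s) (hP01 : ∑ s : S, P0 s = 1)
    -- the forward stationary policy
    (πf : S → A → ℝ) (hπf0 : ∀ s a, 0 ≤ πf s a) (hπf1 : ∀ s, ∑ a : A, πf s a = 1)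
    -- the offline distribution and its kernel
    (μ : S → ℝ) (hμ0 : ∀ s, 0 ≤ μ s) (hμ1 : ∑ s : S, μ s = 1)
    (κ : S → A → ℝ) (hκ0 : ∀ s a, 0 ≤ κ s a) (hκ1 : ∀ s, ∑ a : A, κ s a = 1)
    -- the discriminator class
    (G : Finset (S → ℝ)) (hG : G.Nonempty)
    (ε : ℝ) (hε : 0 ≤ ε)
    -- (i) stationarity of the offline distribution
    (hstat : ∀ s', μ s' = (1 - γ) * P0 s' + γ * ∑ s : S, ∑ a : A, μ s * κ s a * P s a s')
    -- (ii) no-regret guarantee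
    (hnoreg : ∀ g ∈ G,
      |∑ s : S, ∑ a : A, ∑ s' : S,
        dDisc γ P πf P0 s * (πf s a - κ s a) * P s a s' * g s'| ≤ ε)
    -- (iii) exact completeness
    (hcomp : ∀ g ∈ G, ∃ f ∈ G, ∀ s, f s = ∑ a : A, ∑ s' : S, κ s a * P s a s' * g s') :
    G.sup' hG (fun g => |∑ s : S, (dDisc γ P πf P0 s - μ s) * g s|) ≤ ε / (1 - γ) := by
  have h1γ : 0 < 1 - γ := by linarith
  set ν : S → ℝ := dDisc γ P πf P0 with hνdef
  have hbell : ∀ s', ν s' = (1 - γ) * P0 s' +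
      γ * ∑ s : S, ∑ a : A, ν s * πf s a * P s a s' :=
    dDisc_fix P πf P0 hγ0 hγ1 hP0 hπf0 hP00 hP1 hπf1 hP01
  set M : ℝ := G.sup' hG (fun g => |∑ s : S, (ν s - μ s) * g s|) with hMdef
  have hkey : ∀ g ∈ G, |∑ s : S, (ν s - μ s) * g s| ≤ γ * ε + γ * M := by
    intro g hg
    obtain ⟨f, hfG, hf⟩ := hcomp g hg
    have hdiff : ∀ s', ν s' - μ s' =
        γ * ((∑ s : S, ∑ a : A, ν s * πf s a * P s a s')
          - ∑ s : S, ∑ a : A, μ s * κ s a * P s a s') := by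
      intro s'
      rw [hbell s', hstat s']; ring
    set T1 : ℝ := ∑ s : S, ∑ a : A, ∑ s' : S, ν s * πf s a * P s a s' * g s' with hT1
    set T2 : ℝ := ∑ s : S, ∑ a : A, ∑ s' : S, ν s * κ s a * P s a s' * g s' with hT2
    set T3 : ℝ := ∑ s : S, ∑ a : A, ∑ s' : S, μ s * κ s a * P s a s' * g s' with hT3
    have e1 : ∑ s : S, (ν s - μ s) * g s = γ * (T1 - T3) := by
      calc ∑ s' : S, (ν s' - μ s') * g s'
          = ∑ s' : S, γ * (((∑ s : S, ∑ a : A, ν s * πf s a * P s a s')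
              - ∑ s : S, ∑ a : A, μ s * κ s a * P s a s') * g s') := by
            refine Finset.sum_congr rfl fun s' _ => ?_
            rw [hdiff s']; ring
        _ = γ * ((∑ s' : S, (∑ s : S, ∑ a : A, ν s * πf s a * P s a s') * g s')
              - ∑ s' : S, (∑ s : S, ∑ a : A, μ s * κ s a * P s a s') * g s') := by
            rw [← Finset.mul_sum, ← Finset.sum_sub_distrib]
            congr 1
            exact Finset.sum_congr rfl fun s' _ => by ring
        _ = γ * (T1 - T3) := by rw [hT1, hT3, swap3, swap3]
    have e2 : ∑ s : S, ∑ a : A, ∑ s' : S, ν s * (πf s a - κ s a) * P s a s' * g s'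
        = T1 - T2 := by
      rw [hT1, hT2, ← Finset.sum_sub_distrib]
      refine Finset.sum_congr rfl fun s _ => ?_
      rw [← Finset.sum_sub_distrib]
      refine Finset.sum_congr rfl fun a _ => ?_
      rw [← Finset.sum_sub_distrib]
      exact Finset.sum_congr rfl fun s' _ => by ring
    have e3 : ∑ s : S, (ν s - μ s) * f s = T2 - T3 := by
      rw [hT2, hT3, ← Finset.sum_sub_distrib]
      refine Finset.sum_congr rfl fun s _ => ?_
      rw [hf s, ← Finset.sum_sub_distrib, Finset.mul_sum]
      refine Finset.sum_congr rfl fun a _ => ?_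
      rw [← Finset.sum_sub_distrib, Finset.mul_sum]
      exact Finset.sum_congr rfl fun s' _ => by ring
    have emain : ∑ s : S, (ν s - μ s) * g s
        = γ * (∑ s : S, ∑ a : A, ∑ s' : S, ν s * (πf s a - κ s a) * P s a s' * g s')
          + γ * ∑ s : S, (ν s - μ s) * f s := by
      rw [e1, e2, e3]; ring
    have hA : |∑ s : S, ∑ a : A, ∑ s' : S,
        ν s * (πf s a - κ s a) * P s a s' * g s'| ≤ ε := hnoreg g hg
    have hC : |∑ s : S, (ν s - μ s) * f s| ≤ M :=
      Finset.le_sup' (fun g => |∑ s : S, (ν s - μ s) * g s|) hfG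
    calc |∑ s : S, (ν s - μ s) * g s|
        ≤ γ * |∑ s : S, ∑ a : A, ∑ s' : S, ν s * (πf s a - κ s a) * P s a s' * g s'|
          + γ * |∑ s : S, (ν s - μ s) * f s| := by
          rw [emain]
          refine le_trans (abs_add_le _ _) ?_
          rw [abs_mul, abs_mul, abs_of_nonneg hγ0]
      _ ≤ γ * ε + γ * M := by
          gcongr
  have hMle : M ≤ γ * ε + γ * M := Finset.sup'_le hG _ hkey
  rw [le_div_iff₀ h1γ]
  nlinarith
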